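/- The set {ψ(O) : O an orientation of M} equals the set of lattice points Z_A ∩ ℤ^r of the zonotope Z_A, and two orientations O, O' satisfy ψ(O) = ψ(O') if and only if O and O' are circuit-reversal equivalent. Hence ψ induces a bijection between the set of circuit-reversal equivalence classes of orientations of M and the lattice points of Z_A. -/

import Mathlib

open Matrix

/-- A vector with all entries in `{-1,0,1}`. -/
def SignVec {m : ℕ} (C : Fin m → ℤ) : Prop := ∀ e, C e = -1 ∨ C e = 0 ∨ C e = 1

/-- A signed circuit of `A`. -/
def IsCircuit {r m : ℕ} (A : Matrix (Fin r) (Fin m) ℤ) (C : Fin m → ℤ) : Prop :=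
  SignVec C ∧ C ≠ 0 ∧ A.mulVec C = 0 ∧
    ∀ v : Fin m → ℤ, v ≠ 0 → A.mulVec v = 0 →
      {e | v e ≠ 0} ⊆ {e | C e ≠ 0} → {e | v e ≠ 0} = {e | C e ≠ 0}

/-- An orientation of the matroid: a function `E → {-1,1}`. -/
def IsOrientation {m : ℕ} (O : Fin m → ℤ) : Prop := ∀ e, O e = 1 ∨ O e = -1

/-- One circuit reversal: negate `O` on the support of a signed circuit compatible with `O`. -/
def CircuitReversal {r m : ℕ} (A : Matrix (Fin r) (Fin m) ℤ) (O O' : Fin m → ℤ) : Prop :=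
  ∃ C : Fin m → ℤ, IsCircuit A C ∧ (∀ e, C e ≠ 0 → O e = C e) ∧
    (∀ e, C e ≠ 0 → O' e = -O e) ∧ (∀ e, C e = 0 → O' e = O e)

/-- Circuit-reversal equivalence: the equivalence relation generated by circuit reversals. -/
def CircEquiv {r m : ℕ} (A : Matrix (Fin r) (Fin m) ℤ) : (Fin m → ℤ) → (Fin m → ℤ) → Prop :=
  Relation.EqvGen (CircuitReversal A)

/-- `ψ(O) = A·((O+1)/2)`. -/
def psi {r m : ℕ} (A : Matrix (Fin r) (Fin m) ℤ) (O : Fin m → ℤ) : Fin r → ℤ :=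
  A.mulVec (fun e => (O e + 1) / 2)

/-!
For totally unimodular `A` and integral `b`, every extreme point of the box polytope
`{x | A x = b, ⌊x₀⌋ ≤ x ≤ ⌈x₀⌉}` is integral: its fractional coordinates index linearly
independent columns, so they solve a square system with determinant `±1`. Hence every real
solution of `A x = b` can be rounded coordinatewise to an integral one. Rounding a point of `Z_A`
over a lattice point `y` gives a `0/1` vector, i.e. an orientation `O` with `ψ(O) = y`.

Circuit reversals preserve `ψ`. Conversely, if `ψ(O) = ψ(O')` then `O' - O` is in the kernel.
Among the integral kernel vectors conforming to it, one of minimal support is elementary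
(eliminating a coordinate against a vector of smaller support would shrink it further), and
rounding it after scaling into `[-1, 1]` yields a signed circuit conforming to `O' - O`.
Reversing that circuit moves `O` strictly closer to `O'`.
-/

open Filter Topology

namespace Matrix

variable {m n : Type*} [Fintype m] [Fintype n]

theorem exists_isUnit_submatrix_of_linearIndependent_col {K : Type*} [Field K] [DecidableEq n]
    (M : Matrix m n K) (h : LinearIndependent K M.col) :
    ∃ f : n → m, IsUnit (M.submatrix f id) := by
  obtain ⟨κ, a, ha, hspan, hli⟩ := exists_linearIndependent' K M.row
  have : Finite κ := Finite.of_injective a ha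
  have : Fintype κ := Fintype.ofFinite κ
  have hcard : Fintype.card n = Fintype.card κ := by
    rw [linearIndependent_iff_card_eq_finrank_span.mp hli, Set.finrank, hspan,
      ← rank_eq_finrank_span_row, ← rank_transpose,
      (show LinearIndependent K Mᵀ.row from h).rank_matrix]
  obtain e := Fintype.equivOfCardEq hcard
  exact ⟨a ∘ e, linearIndependent_rows_iff_isUnit.mp (hli.comp e e.injective)⟩

omit [Fintype m] in
theorem map_intCast_mulVec {R : Type*} [Ring R] (A : Matrix m n ℤ) (v : n → ℤ) :
    A.map ((↑) : ℤ → R) *ᵥ ((↑) ∘ v) = (↑) ∘ (A *ᵥ v) := by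
  funext i; exact (RingHom.map_mulVec (Int.castRingHom R) A v i).symm

omit [Fintype m] [Fintype n] in
theorem IsTotallyUnimodular.isUnit_det_submatrix {A : Matrix m n ℤ} (hA : A.IsTotallyUnimodular)
    {ι : Type*} [Fintype ι] [DecidableEq ι] (f : ι → m) (g : ι → n)
    (h : (A.submatrix f g).det ≠ 0) : IsUnit (A.submatrix f g).det := by
  obtain ⟨s, hs⟩ := (A.isTotallyUnimodular_iff_fintype.mp hA) ι f g
  rw [Int.isUnit_iff]
  rcases s with _ | _ | _ <;> simp_all

theorem IsTotallyUnimodular.mem_range_intCast_of_linearIndepOn {A : Matrix m n ℤ}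
    (hA : A.IsTotallyUnimodular) {S : Set n} (hS : LinearIndepOn ℝ (A.map ((↑) : ℤ → ℝ)).col S)
    {x : n → ℝ} (hxS : ∀ e ∉ S, x e ∈ Set.range ((↑) : ℤ → ℝ)) {b : m → ℤ}
    (hb : A.map (↑) *ᵥ x = (↑) ∘ b) (e : n) : x e ∈ Set.range ((↑) : ℤ → ℝ) := by
  classical
  by_cases he : e ∈ S
  swap
  · exact hxS e he
  obtain ⟨f, hf⟩ := exists_isUnit_submatrix_of_linearIndependent_col
    ((A.map ((↑) : ℤ → ℝ)).submatrix id ((↑) : S → n)) hS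
  set B := A.submatrix f ((↑) : S → n)
  have hBdet : IsUnit B.det := by
    refine hA.isUnit_det_submatrix f _ ?_
    have hBmap : B.map ((↑) : ℤ → ℝ) = ((A.map (↑)).submatrix id (↑)).submatrix f id := rfl
    rw [← hBmap, isUnit_iff_isUnit_det, ← Int.cast_det] at hf
    exact_mod_cast hf.ne_zero
  let c : S → ℤ := fun j => b (f j) - ∑ e : {e // e ∉ S}, A (f j) e * round (x e)
  have hsys : B.map (↑) *ᵥ (fun j : S => x j) = (↑) ∘ c := by
    funext j
    have hj := congrFun hb (f j)
    rw [mulVec, dotProduct, ← Fintype.sum_subtype_add_sum_subtype (· ∈ S)] at hj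
    have hround : ∀ e : {e // e ∉ S}, ((round (x e) : ℤ) : ℝ) = x e := by
      rintro ⟨e, he⟩
      obtain ⟨k, hk⟩ := hxS e he
      simp [← hk]
    simp only [c, mulVec, dotProduct, Function.comp_apply, map_apply, B, submatrix_apply] at hj ⊢
    push_cast
    simp only [hround]
    linarith
  have hxS' : (fun j : S => x j) = (↑) ∘ (B⁻¹ *ᵥ c) := by
    calc (fun j : S => x j) = (B⁻¹ * B).map (↑) *ᵥ (fun j : S => x j) := by
          rw [nonsing_inv_mul _ hBdet]; simp
      _ = B⁻¹.map (↑) *ᵥ ((↑) ∘ c) := by rw [map_mul_intCast, ← mulVec_mulVec, hsys]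
      _ = (↑) ∘ (B⁻¹ *ᵥ c) := map_intCast_mulVec _ _
  exact ⟨_, (congrFun hxS' ⟨e, he⟩).symm⟩

omit [Fintype m] in
theorem linearIndepOn_col_of_mem_extremePoints {M : Matrix m n ℝ} {b : m → ℝ} {l u p : n → ℝ}
    (hp : p ∈ Set.extremePoints ℝ ({x | M *ᵥ x = b} ∩ Set.Icc l u)) :
    LinearIndepOn ℝ M.col {e | l e < p e ∧ p e < u e} := by
  rw [linearIndepOn_iff]
  intro c hc hcomb
  rw [Finsupp.mem_supported'] at hc
  have hker : M *ᵥ ⇑c = 0 := by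
    rw [Finsupp.linearCombination_apply, Finsupp.sum_fintype _ _ (by simp)] at hcomb
    simpa [mulVec_eq_sum, col] using hcomb
  obtain ⟨⟨hpM, hpl, hpu⟩, hpext⟩ := mem_extremePoints.mp hp
  have hev : ∀ᶠ t in 𝓝 (0 : ℝ), p + t • ⇑c ∈ Set.Icc l u := by
    have : ∀ e, ∀ᶠ t in 𝓝 (0 : ℝ), l e ≤ p e + t * c e ∧ p e + t * c e ≤ u e := by
      intro e
      by_cases he : l e < p e ∧ p e < u e
      · have hlim : Tendsto (fun t : ℝ => p e + t * c e) (𝓝 0) (𝓝 (p e)) := by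
          simpa using ((tendsto_id (x := 𝓝 (0 : ℝ))).mul_const (c e)).const_add (p e)
        exact hlim.eventually (Icc_mem_nhds he.1 he.2)
      · simp [hc e he, hpl e, hpu e]
    filter_upwards [Filter.eventually_all.mpr this] with t ht
    exact ⟨fun e => (ht e).1, fun e => (ht e).2⟩
  have hev_neg : ∀ᶠ t in 𝓝 (0 : ℝ), p + (-t) • ⇑c ∈ Set.Icc l u :=
    (continuous_neg.tendsto' 0 0 neg_zero).eventually hev
  obtain ⟨t, ⟨hpos, hneg⟩, ht⟩ :=
    (((hev.and hev_neg).filter_mono nhdsWithin_le_nhds).and self_mem_nhdsWithin).exists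
      (f := 𝓝[>] (0 : ℝ))
  have hmem : ∀ s : ℝ, M *ᵥ (p + s • ⇑c) = b := fun s => by
    rw [mulVec_add, mulVec_smul, hker, smul_zero, add_zero, hpM]
  have hseg : p ∈ openSegment ℝ (p + t • ⇑c) (p + (-t) • ⇑c) :=
    ⟨1 / 2, 1 / 2, by norm_num, by norm_num, by norm_num, by module⟩
  have htc := (hpext _ ⟨hmem t, hpos⟩ _ ⟨hmem (-t), hneg⟩ hseg).1
  rw [add_eq_left, smul_eq_zero] at htc
  exact DFunLike.coe_injective (htc.resolve_left (ne_of_gt ht))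

theorem IsTotallyUnimodular.exists_mulVec_eq_of_floor_le_of_le_ceil {A : Matrix m n ℤ}
    (hA : A.IsTotallyUnimodular) {x : n → ℝ} {b : m → ℤ}
    (hx : A.map ((↑) : ℤ → ℝ) *ᵥ x = (↑) ∘ b) :
    ∃ z : n → ℤ, A *ᵥ z = b ∧ ∀ e, ⌊x e⌋ ≤ z e ∧ z e ≤ ⌈x e⌉ := by
  set P := {y | A.map ((↑) : ℤ → ℝ) *ᵥ y = (↑) ∘ b} ∩
    Set.Icc (fun e => (⌊x e⌋ : ℝ)) (fun e => (⌈x e⌉ : ℝ))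
  have hP : IsCompact P :=
    isCompact_Icc.inter_left
      (isClosed_eq (continuous_const.matrix_mulVec continuous_id) continuous_const)
  obtain ⟨p, hp⟩ :=
    hP.extremePoints_nonempty ⟨x, hx, fun e => Int.floor_le _, fun e => Int.le_ceil _⟩
  obtain ⟨hpA, hpl, hpu⟩ := hp.1
  have hint : ∀ e, p e ∈ Set.range ((↑) : ℤ → ℝ) := by
    refine hA.mem_range_intCast_of_linearIndepOn (linearIndepOn_col_of_mem_extremePoints hp)
      (fun e he => ?_) hpA
    rcases (hpl e).lt_or_eq with h | h
    · exact ⟨_, (le_antisymm (hpu e) (not_lt.mp fun h' => he ⟨h, h'⟩)).symm⟩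
    · exact ⟨_, h⟩
  choose z hz using hint
  have hzp : (↑) ∘ z = p := funext hz
  refine ⟨z, ?_, fun e => ⟨?_, ?_⟩⟩
  · have := map_intCast_mulVec (R := ℝ) A z
    rw [hzp, hpA] at this
    exact funext fun i => by simpa using congrFun this.symm i
  · exact_mod_cast (show (⌊x e⌋ : ℝ) ≤ z e from (hz e).symm ▸ hpl e)
  · exact_mod_cast (show (z e : ℝ) ≤ ⌈x e⌉ from (hz e).symm ▸ hpu e)

end Matrix

section Conformal

variable {m n : Type*}

def Conforms (u w : n → ℤ) : Prop := ∀ e, u e ≠ 0 → 0 < u e * w e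

theorem conforms_self (w : n → ℤ) : Conforms w w := fun _ h => mul_self_pos.mpr h

theorem Conforms.trans {u v w : n → ℤ} (huv : Conforms u v) (hvw : Conforms v w) :
    Conforms u w := by
  intro e hu
  have h₁ := huv e hu
  have h₂ := hvw e (by rintro h; simp [h] at h₁)
  nlinarith [mul_pos h₁ h₂, sq_nonneg (v e)]

theorem Conforms.support_subset {u w : n → ℤ} (h : Conforms u w) :
    Function.support u ⊆ Function.support w := by
  intro e hu hw
  simpa [hw] using h e hu

def conformalKernel [Fintype n] (A : Matrix m n ℤ) (d : n → ℤ) : Set (n → ℤ) :=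
  {w | w ≠ 0 ∧ A *ᵥ w = 0 ∧ Conforms w d}

open Function in
theorem exists_smul_sub_smul_conforms_of_support_ssubset [Fintype n] {z v : n → ℤ}
    (hv : v ≠ 0) (hvz : support v ⊂ support z) :
    ∃ a b : ℤ, a • z - b • v ≠ 0 ∧ Conforms (a • z - b • v) z ∧
      support (a • z - b • v) ⊂ support z := by
  have hvz' : ∀ e, z e = 0 → v e = 0 := fun e hze => not_not.mp fun hve => hvz.1 hve hze
  obtain ⟨e₀, hze₀, hve₀⟩ := Set.exists_of_ssubset hvz
  obtain ⟨e₁, -, he₁⟩ :=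
    Finset.univ.exists_max_image (fun e => ((|v e| : ℤ) : ℚ) / ((|z e| : ℤ) : ℚ))
    ⟨e₀, Finset.mem_univ _⟩
  have hratio : 0 < ((|v e₁| : ℤ) : ℚ) / ((|z e₁| : ℤ) : ℚ) := by
    obtain ⟨e, he⟩ := Function.ne_iff.mp hv
    refine lt_of_lt_of_le ?_ (he₁ e (Finset.mem_univ _))
    exact div_pos (by exact_mod_cast abs_pos.mpr he) (by exact_mod_cast abs_pos.mpr (hvz.1 he))
  have hve₁ : v e₁ ≠ 0 := by rintro h; simp [h] at hratio
  have hze₁ : z e₁ ≠ 0 := by rintro h; simp [h] at hratio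
  have hcross : ∀ e, |v e| * |z e₁| ≤ |v e₁| * |z e| := by
    intro e
    by_cases hze : z e = 0
    · simp [hvz' e hze, hze]
    · have := he₁ e (Finset.mem_univ _)
      rw [div_le_div_iff₀ (by exact_mod_cast abs_pos.mpr hze)
        (by exact_mod_cast abs_pos.mpr hze₁)] at this
      exact_mod_cast this
  -- `e₁` maximises `|v e| / |z e|`, so `y` still conforms to `z` but vanishes at `e₁`
  set y := |v e₁| • z - (z e₁ * (v e₁).sign) • v with hy
  have hyz : Conforms y z := by
    intro e hye
    have hze : z e ≠ 0 := fun h => hye (by simp [hy, h, hvz' e h])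
    have hbound : z e₁ * (v e₁).sign * v e * z e ≤ |v e₁| * (z e * z e) := by
      calc z e₁ * (v e₁).sign * v e * z e ≤ |z e₁ * (v e₁).sign * v e * z e| := le_abs_self _
        _ = |v e| * |z e₁| * |z e| := by
          simp only [abs_mul, Int.abs_sign_of_ne_zero hve₁]; ring
        _ ≤ |v e₁| * |z e| * |z e| := mul_le_mul_of_nonneg_right (hcross e) (abs_nonneg _)
        _ = |v e₁| * (z e * z e) := by rw [mul_assoc, abs_mul_abs_self]
    have : y e * z e = |v e₁| * (z e * z e) - z e₁ * (v e₁).sign * v e * z e := by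
      simp only [hy, Pi.sub_apply, Pi.smul_apply, smul_eq_mul]; ring
    exact lt_of_le_of_ne (by linarith) (Ne.symm (mul_ne_zero hye hze))
  have hye₁ : y e₁ = 0 := by
    simp only [hy, Pi.sub_apply, Pi.smul_apply, smul_eq_mul]
    rw [mul_assoc, Int.sign_mul_self_eq_abs]; ring
  refine ⟨_, _, Function.ne_iff.mpr ⟨e₀, ?_⟩, hyz,
    (Set.ssubset_iff_of_subset hyz.support_subset).mpr ⟨e₁, hze₁, by simpa using hye₁⟩⟩
  simpa [show v e₀ = 0 by simpa using hve₀, hve₁] using hze₀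

open Function in
theorem support_eq_of_minimal [Fintype n] {A : Matrix m n ℤ} {d z v : n → ℤ}
    (hz : z ∈ conformalKernel A d)
    (hmin : ∀ w ∈ conformalKernel A d, (support z).ncard ≤ (support w).ncard)
    (hv : v ≠ 0) (hAv : A *ᵥ v = 0) (hvz : support v ⊆ support z) : support v = support z := by
  by_contra hne
  obtain ⟨a, b, hy0, hyz, hlt⟩ :=
    exists_smul_sub_smul_conforms_of_support_ssubset hv (hvz.ssubset_of_ne hne)
  have hAy : A *ᵥ (a • z - b • v) = 0 := by
    rw [mulVec_sub, mulVec_smul, mulVec_smul, hz.2.1, hAv, smul_zero, smul_zero, sub_zero]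
  exact (hmin _ ⟨hy0, hAy, hyz.trans hz.2.2⟩).not_gt (Set.ncard_lt_ncard hlt)

end Conformal

section Rounding

variable {R : Type*} [Ring R] [LinearOrder R] [IsStrictOrderedRing R] [FloorRing R] {a : R} {k : ℤ}

theorem mul_pos_of_floor_le_of_le_ceil (h₁ : ⌊a⌋ ≤ k) (h₂ : k ≤ ⌈a⌉) (hk : k ≠ 0) :
    0 < k * a := by
  rcases lt_trichotomy a 0 with ha | rfl | ha
  · have : k < 0 := lt_of_le_of_ne (h₂.trans (Int.ceil_le.mpr (by simpa using ha.le))) hk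
    exact mul_pos_of_neg_of_neg (by exact_mod_cast this) ha
  · simp at h₁ h₂; omega
  · have : 0 < k := lt_of_le_of_ne ((Int.floor_nonneg.mpr ha.le).trans h₁) hk.symm
    exact mul_pos (by exact_mod_cast this) ha

theorem ne_zero_of_floor_le_of_le_ceil (h₁ : ⌊a⌋ ≤ k) (h₂ : k ≤ ⌈a⌉) (ha : 1 ≤ |a|) : k ≠ 0 := by
  rintro rfl
  have : a < 1 := by simpa using Int.floor_le_iff.mp h₁
  have : -1 < a := by simpa using Int.le_ceil_iff.mp h₂
  exact absurd ha (not_le.mpr (abs_lt.mpr ⟨‹_›, ‹_›⟩))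

theorem abs_le_one_of_floor_le_of_le_ceil (h₁ : ⌊a⌋ ≤ k) (h₂ : k ≤ ⌈a⌉) (ha : |a| ≤ 1) :
    |k| ≤ 1 := by
  obtain ⟨hl, hu⟩ := abs_le.mp ha
  have : -1 ≤ ⌊a⌋ := Int.le_floor.mpr (by simpa using hl)
  have : ⌈a⌉ ≤ 1 := Int.ceil_le.mpr (by simpa using hu)
  exact abs_le.mpr ⟨by omega, by omega⟩

end Rounding

section Circuits

open Function

variable {r m : ℕ} {A : Matrix (Fin r) (Fin m) ℤ}

theorem IsCircuit.neg {C : Fin m → ℤ} (h : IsCircuit A C) : IsCircuit A (-C) := by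
  obtain ⟨hsign, hne, hker, hmin⟩ := h
  refine ⟨fun e => ?_, neg_ne_zero.mpr hne, by rw [mulVec_neg, hker, neg_zero], ?_⟩
  · rcases hsign e with h | h | h <;> simp [h]
  · simpa using hmin

theorem Matrix.IsTotallyUnimodular.exists_signVec_conforms (hA : A.IsTotallyUnimodular)
    {z : Fin m → ℤ} (hz : z ≠ 0) (hAz : A *ᵥ z = 0) :
    ∃ w, SignVec w ∧ w ≠ 0 ∧ A *ᵥ w = 0 ∧ Conforms w z := by
  obtain ⟨e, he⟩ := Function.ne_iff.mp hz
  obtain ⟨e₂, -, he₂⟩ := Finset.univ.exists_max_image (fun e => |z e|) ⟨e, Finset.mem_univ _⟩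
  have hze₂ : z e₂ ≠ 0 := abs_pos.mp ((abs_pos.mpr he).trans_le (he₂ e (Finset.mem_univ _)))
  have hM : (0 : ℝ) < |(z e₂ : ℝ)| := abs_pos.mpr (by exact_mod_cast hze₂)
  -- round `z / ‖z‖∞`, whose entries lie in `[-1, 1]` and which is `±1` at `e₂`
  set y : Fin m → ℝ := fun e => z e / |(z e₂ : ℝ)| with hy
  have hAy : A.map ((↑) : ℤ → ℝ) *ᵥ y = (↑) ∘ (0 : Fin r → ℤ) := by
    have : y = (|(z e₂ : ℝ)|)⁻¹ • ((↑) ∘ z) := by ext; simp [hy, div_eq_inv_mul]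
    rw [this, mulVec_smul, map_intCast_mulVec, hAz]; simp
  obtain ⟨w, hAw, hw⟩ := hA.exists_mulVec_eq_of_floor_le_of_le_ceil hAy
  refine ⟨w, fun e => ?_, Function.ne_iff.mpr ⟨e₂, ?_⟩, hAw, fun e hwe => ?_⟩
  · have := abs_le_one_of_floor_le_of_le_ceil (hw e).1 (hw e).2 (by
      rw [hy, abs_div, abs_abs]
      exact div_le_one_of_le₀ (by exact_mod_cast he₂ e (Finset.mem_univ _)) hM.le)
    rw [abs_le] at this
    omega
  · refine ne_zero_of_floor_le_of_le_ceil (hw e₂).1 (hw e₂).2 ?_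
    rw [hy, abs_div, abs_abs, div_self hM.ne']
  · have := mul_pos_of_floor_le_of_le_ceil (hw e).1 (hw e).2 hwe
    rw [hy, mul_div_assoc'] at this
    exact_mod_cast (div_pos_iff_of_pos_right hM).mp this

theorem exists_isCircuit_conforms (hA : A.IsTotallyUnimodular) {d : Fin m → ℤ} (hd : d ≠ 0)
    (hAd : A *ᵥ d = 0) : ∃ C, IsCircuit A C ∧ Conforms C d := by
  obtain ⟨z, hz, hzmin⟩ := (measure fun w : Fin m → ℤ => (support w).ncard).wf.has_min
    (conformalKernel A d) ⟨d, hd, hAd, conforms_self d⟩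
  replace hzmin : ∀ w ∈ conformalKernel A d, (support z).ncard ≤ (support w).ncard :=
    fun w hw => not_lt.mp (hzmin w hw)
  obtain ⟨w, hsign, hw, hAw, hwz⟩ := hA.exists_signVec_conforms hz.1 hz.2.1
  have hsupp : support w = support z := support_eq_of_minimal hz hzmin hw hAw hwz.support_subset
  refine ⟨w, ⟨hsign, hw, hAw, fun v hv hAv hvw => ?_⟩, hwz.trans hz.2.2⟩
  change support v ⊆ support w at hvw
  change support v = support w
  rw [hsupp] at hvw ⊢
  exact support_eq_of_minimal hz hzmin hv hAv hvw

end Circuits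

section Orientations

variable {r m : ℕ} {A : Matrix (Fin r) (Fin m) ℤ}

theorem mulVec_eq_two_smul_psi_sub {O : Fin m → ℤ} (hO : IsOrientation O) :
    A *ᵥ O = 2 • psi A O - A *ᵥ 1 := by
  have : O = 2 • (fun e => (O e + 1) / 2) - 1 := by
    ext e; rcases hO e with h | h <;> simp [h]
  conv_lhs => rw [this]
  rw [mulVec_sub, mulVec_smul, psi]

theorem psi_eq_of_circuitReversal {O O' : Fin m → ℤ} (h : CircuitReversal A O O') :
    psi A O = psi A O' := by
  obtain ⟨C, hC, hcomp, hflip, hkeep⟩ := h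
  have : (fun e => (O e + 1) / 2) = (fun e => (O' e + 1) / 2) + C := by
    ext e
    by_cases h0 : C e = 0
    · simp [hkeep e h0, h0]
    · rw [Pi.add_apply, hflip e h0, hcomp e h0]
      rcases hC.1 e with h | h | h <;> simp_all
  rw [psi, psi, this, mulVec_add, hC.2.2.1, add_zero]

theorem psi_eq_of_circEquiv {O O' : Fin m → ℤ} (h : CircEquiv A O O') : psi A O = psi A O' :=
  (Equivalence.eqvGen_iff (InvImage.equivalence _ (psi A) eq_equivalence)).mp
    (Relation.EqvGen.mono (fun _ _ => psi_eq_of_circuitReversal) _ _ h)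

theorem exists_circuitReversal_of_psi_eq (hA : A.IsTotallyUnimodular) {O O' : Fin m → ℤ}
    (hO : IsOrientation O) (hO' : IsOrientation O') (hpsi : psi A O = psi A O') (hne : O ≠ O') :
    ∃ O₁, IsOrientation O₁ ∧ CircuitReversal A O O₁ ∧ {e | O₁ e ≠ O' e} ⊂ {e | O e ≠ O' e} := by
  have hAd : A *ᵥ (O' - O) = 0 := by
    rw [mulVec_sub, mulVec_eq_two_smul_psi_sub hO, mulVec_eq_two_smul_psi_sub hO', hpsi, sub_self]
  obtain ⟨C, hC, hCd⟩ := exists_isCircuit_conforms hA (sub_ne_zero.mpr hne.symm) hAd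
  have hCO : ∀ e, C e ≠ 0 → O e = -C e ∧ O' e = C e := by
    intro e he
    have := hCd e he
    simp only [Pi.sub_apply] at this
    rcases hC.1 e with h | h | h <;> rcases hO e with h' | h' <;> rcases hO' e with h'' | h'' <;>
      simp_all
  refine ⟨fun e => if C e = 0 then O e else -O e, fun e => ?_, ⟨-C, hC.neg, ?_, ?_, ?_⟩, ?_⟩
  · by_cases h : C e = 0 <;> rcases hO e with h' | h' <;> simp [h, h']
  · intro e he; simpa using (hCO e (by simpa using he)).1
  · intro e he; simp [show C e ≠ 0 by simpa using he]
  · intro e he; simp [show C e = 0 by simpa using he]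
  · refine (Set.ssubset_iff_of_subset fun e he => ?_).mpr ?_
    · by_cases h : C e = 0
      · simpa [h] using he
      · simp [h, (hCO e h).1, (hCO e h).2] at he
    · obtain ⟨e, he⟩ : ∃ e, C e ≠ 0 := Function.ne_iff.mp hC.2.1
      have := hCO e he
      exact ⟨e, by simp [this]; omega, by simp [he, this]⟩

theorem circEquiv_of_psi_eq (hA : A.IsTotallyUnimodular) {O O' : Fin m → ℤ}
    (hO : IsOrientation O) (hO' : IsOrientation O') (hpsi : psi A O = psi A O') :
    CircEquiv A O O' := by
  induction hk : {e | O e ≠ O' e}.ncard using Nat.strong_induction_on generalizing O with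
  | _ k ih =>
    by_cases hne : O = O'
    · exact hne ▸ Relation.EqvGen.refl O
    obtain ⟨O₁, hO₁, hrev, hlt⟩ := exists_circuitReversal_of_psi_eq hA hO hO' hpsi hne
    have hpsi₁ : psi A O₁ = psi A O' := (psi_eq_of_circuitReversal hrev).symm.trans hpsi
    exact Relation.EqvGen.trans _ _ _ (Relation.EqvGen.rel _ _ hrev)
      (ih _ (hk ▸ Set.ncard_lt_ncard hlt) hO₁ hpsi₁ rfl)

theorem exists_orientation_psi_eq (hA : A.IsTotallyUnimodular) {y : Fin r → ℤ} {x : Fin m → ℝ}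
    (hx : ∀ e, x e ∈ Set.Icc (0 : ℝ) 1) (hAx : A.map ((↑) : ℤ → ℝ) *ᵥ x = (↑) ∘ y) :
    ∃ O, IsOrientation O ∧ psi A O = y := by
  obtain ⟨z, hAz, hz⟩ := hA.exists_mulVec_eq_of_floor_le_of_le_ceil hAx
  have hz01 : ∀ e, 0 ≤ z e ∧ z e ≤ 1 := fun e =>
    ⟨(Int.floor_nonneg.mpr (hx e).1).trans (hz e).1,
      (hz e).2.trans (Int.ceil_le.mpr (by simpa using (hx e).2))⟩
  refine ⟨fun e => 2 * z e - 1, fun e => ?_, ?_⟩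
  · show 2 * z e - 1 = 1 ∨ 2 * z e - 1 = -1
    have := hz01 e; omega
  · rw [psi, ← hAz]
    congr 1
    ext e
    omega

theorem exists_mem_zonotope_of_orientation {O : Fin m → ℤ} (hO : IsOrientation O) :
    ∃ x : Fin m → ℝ, (∀ e, x e ∈ Set.Icc (0 : ℝ) 1) ∧
      A.map ((↑) : ℤ → ℝ) *ᵥ x = (↑) ∘ psi A O :=
  ⟨(↑) ∘ fun e => (O e + 1) / 2, fun e => by rcases hO e with h | h <;> simp [h],
    map_intCast_mulVec _ _⟩

end Orientations

theorem stmt7_general {r m : ℕ} (A : Matrix (Fin r) (Fin m) ℤ)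
    (hTU : A.IsTotallyUnimodular) :
    ({y : Fin r → ℤ | ∃ O : Fin m → ℤ, IsOrientation O ∧ psi A O = y} =
      {y : Fin r → ℤ | ∃ x : Fin m → ℝ, (∀ e, x e ∈ Set.Icc (0:ℝ) 1) ∧
        (A.map ((↑) : ℤ → ℝ)).mulVec x = fun i => (y i : ℝ)}) ∧
    ∀ O O' : Fin m → ℤ, IsOrientation O → IsOrientation O' →
      (psi A O = psi A O' ↔ CircEquiv A O O') := by
  refine ⟨Set.ext fun y => ⟨?_, ?_⟩, fun O O' hO hO' =>
    ⟨circEquiv_of_psi_eq hTU hO hO', psi_eq_of_circEquiv⟩⟩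
  · rintro ⟨O, hO, rfl⟩
    exact exists_mem_zonotope_of_orientation hO
  · rintro ⟨x, hx, hAx⟩
    exact exists_orientation_psi_eq hTU hx hAx

/-- The image of `ψ` on orientations is exactly the set of lattice points of the zonotope
`Z_A`, and `ψ(O) = ψ(O')` iff `O` and `O'` are circuit-reversal equivalent; hence `ψ`
induces a bijection between circuit-reversal classes and lattice points of `Z_A`. -/
theorem stmt7 {r m : ℕ} (A : Matrix (Fin r) (Fin m) ℤ)
    (hTU : A.IsTotallyUnimodular) (hrank : (A.map ((↑) : ℤ → ℝ)).rank = r) :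
    ({y : Fin r → ℤ | ∃ O : Fin m → ℤ, IsOrientation O ∧ psi A O = y} =
      {y : Fin r → ℤ | ∃ x : Fin m → ℝ, (∀ e, x e ∈ Set.Icc (0:ℝ) 1) ∧
        (A.map ((↑) : ℤ → ℝ)).mulVec x = fun i => (y i : ℝ)}) ∧
    ∀ O O' : Fin m → ℤ, IsOrientation O → IsOrientation O' →
      (psi A O = psi A O' ↔ CircEquiv A O O') :=
  stmt7_general A hTU
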